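/- arXiv:2210.01671 — 5 statements merged into one kernel-verified Lean document; each statement's English description precedes it below -/
import Mathlib

section
/- For any c > 0, any positive integer m, and any real t, the principal-value integral (m!/(2πi)) ∫_{c−i∞}^{c+i∞} e^{ts}/s^{m+1} ds equals t^m if t ≥ 0 and equals 0 if t < 0. -/
/-!
For `c > 0` the function `f x = x₊^m e^{-cx}` has Fourier transform `m! / (c + 2πiξ)^(m+1)`
(a Gamma-type integral, computed by induction on `m` via integration by parts). For `m ≥ 1`
`f` is continuous and its transform decays like `|ξ|^{-2}`, so Fourier inversion holds at `t`;
substituting `v = 2πξ` turns it into `(m!/2π) ∫ e^{t(c+iv)} / (c+iv)^(m+1) dv = e^{ct} f t`.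
The integrand being absolutely integrable, the symmetric truncations converge to this integral.
-/

open MeasureTheory Set Filter Topology Complex

section PowMulExpNegMul

variable {a : ℂ}

lemma norm_ofReal_pow_mul_exp_neg_mul (a : ℂ) (m : ℕ) {x : ℝ} (hx : 0 ≤ x) :
    ‖(x : ℂ) ^ m * cexp (-a * x)‖ = x ^ (m : ℝ) * Real.exp (-a.re * x) := by
  simp [norm_exp, abs_of_nonneg hx]

lemma integrableOn_pow_mul_exp_neg_mul (ha : 0 < a.re) (m : ℕ) :
    IntegrableOn (fun x : ℝ => (x : ℂ) ^ m * cexp (-a * x)) (Ioi 0) := by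
  refine Integrable.congr' (integrableOn_rpow_mul_exp_neg_mul_rpow (p := 1) (s := m)
    (by linarith [m.cast_nonneg (α := ℝ)]) zero_lt_one ha) ?_ ?_
  · exact (by fun_prop : Continuous _).aestronglyMeasurable
  · refine (ae_restrict_mem measurableSet_Ioi).mono fun x hx => ?_
    rw [norm_ofReal_pow_mul_exp_neg_mul a m (le_of_lt hx), Real.rpow_one,
      Real.norm_of_nonneg (mul_nonneg (Real.rpow_nonneg (le_of_lt hx) _) (Real.exp_pos _).le)]

lemma tendsto_pow_mul_exp_neg_mul_atTop (ha : 0 < a.re) (m : ℕ) :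
    Tendsto (fun x : ℝ => (x : ℂ) ^ m * cexp (-a * x)) atTop (𝓝 0) := by
  refine tendsto_zero_iff_norm_tendsto_zero.2 <|
    (tendsto_rpow_mul_exp_neg_mul_atTop_nhds_zero m a.re ha).congr' ?_
  filter_upwards [eventually_ge_atTop 0] with x hx
  rw [norm_ofReal_pow_mul_exp_neg_mul a m hx]

lemma hasDerivAt_pow_succ_mul_exp_neg_mul (a : ℂ) (m : ℕ) (x : ℝ) :
    HasDerivAt (fun y : ℝ => (y : ℂ) ^ (m + 1) * cexp (-a * y))
      ((m + 1) * ((x : ℂ) ^ m * cexp (-a * x)) - a * ((x : ℂ) ^ (m + 1) * cexp (-a * x))) x := by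
  have h : HasDerivAt (fun y : ℂ => y ^ (m + 1) * cexp (-a * y))
      (((m + 1 : ℕ) : ℂ) * (x : ℂ) ^ m * cexp (-a * x) + (x : ℂ) ^ (m + 1) * (cexp (-a * x) * -a))
      x := by
    simpa using (hasDerivAt_pow (m + 1) (x : ℂ)).fun_mul ((hasDerivAt_const_mul (-a)).cexp)
  convert h.comp_ofReal using 1
  push_cast
  ring

lemma integral_Ioi_pow_mul_exp_neg_mul (ha : 0 < a.re) (m : ℕ) :
    ∫ x in Ioi (0 : ℝ), (x : ℂ) ^ m * cexp (-a * x) = m.factorial / a ^ (m + 1) := by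
  have ha0 : a ≠ 0 := fun h => by simp [h] at ha
  induction m with
  | zero =>
    simpa using integral_exp_mul_complex_Ioi (a := -a) (by simpa using ha) 0
  | succ m ih =>
    have hI := integrableOn_pow_mul_exp_neg_mul ha
    have hFTC := integral_Ioi_of_hasDerivAt_of_tendsto
      (f := fun x : ℝ => (x : ℂ) ^ (m + 1) * cexp (-a * x)) (by fun_prop)
      (fun x _ => hasDerivAt_pow_succ_mul_exp_neg_mul a m x)
      (((hI m).const_mul _).sub ((hI (m + 1)).const_mul _))
      (tendsto_pow_mul_exp_neg_mul_atTop ha (m + 1))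
    rw [integral_sub ((hI m).const_mul _) ((hI (m + 1)).const_mul _), integral_const_mul,
      integral_const_mul, ih] at hFTC
    -- opaque to `field_simp`, which would otherwise rewrite the integrand
    set I := ∫ x in Ioi (0 : ℝ), (x : ℂ) ^ (m + 1) * cexp (-a * x)
    simp only [ofReal_zero, zero_pow (Nat.succ_ne_zero m), zero_mul, sub_zero] at hFTC
    rw [Nat.factorial_succ, Nat.cast_mul, eq_div_iff (pow_ne_zero _ ha0)]
    field_simp at hFTC
    push_cast
    linear_combination -hFTC

end PowMulExpNegMul

lemma integrable_inv_sq_add_sq {c : ℝ} (hc : c ≠ 0) :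
    Integrable fun v : ℝ => (c ^ 2 + v ^ 2)⁻¹ := by
  refine (((integrable_comp_mul_left_iff _ (inv_ne_zero hc)).2
    integrable_inv_one_add_sq).const_mul (c ^ 2)⁻¹).congr (Eventually.of_forall fun v => ?_)
  field_simp

lemma ofReal_add_mul_I_ne_zero {c : ℝ} (hc : c ≠ 0) (v : ℝ) : (c : ℂ) + v * I ≠ 0 :=
  fun h => hc (by simpa using congrArg re h)

lemma norm_ofReal_add_mul_I_sq (c v : ℝ) : ‖(c : ℂ) + v * I‖ ^ 2 = c ^ 2 + v ^ 2 := by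
  rw [Complex.sq_norm, normSq_add_mul_I]

lemma integrable_inv_ofReal_add_mul_I_pow {c : ℝ} (hc : c ≠ 0) {n : ℕ} (hn : 2 ≤ n) :
    Integrable fun v : ℝ => (((c : ℂ) + v * I) ^ n)⁻¹ := by
  refine ((integrable_inv_sq_add_sq hc).const_mul (|c| ^ (n - 2))⁻¹).mono'
    (by fun_prop (disch := exact pow_ne_zero _ (ofReal_add_mul_I_ne_zero hc _)))
    (Eventually.of_forall fun v => ?_)
  have hcz : |c| ≤ ‖(c : ℂ) + v * I‖ := by simpa using abs_re_le_norm ((c : ℂ) + v * I)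
  calc ‖(((c : ℂ) + v * I) ^ n)⁻¹‖
        = (‖(c : ℂ) + v * I‖ ^ (n - 2) * ‖(c : ℂ) + v * I‖ ^ 2)⁻¹ := by
        rw [norm_inv, norm_pow, ← pow_add, Nat.sub_add_cancel hn]
    _ ≤ (|c| ^ (n - 2) * (c ^ 2 + v ^ 2))⁻¹ := by
        rw [norm_ofReal_add_mul_I_sq]
        gcongr
    _ = (|c| ^ (n - 2))⁻¹ * (c ^ 2 + v ^ 2)⁻¹ := mul_inv _ _

lemma integrable_exp_mul_div_ofReal_add_mul_I_pow {c : ℝ} (hc : c ≠ 0) {n : ℕ} (hn : 2 ≤ n)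
    (t : ℝ) : Integrable fun v : ℝ => cexp (t * (c + v * I)) / ((c : ℂ) + v * I) ^ n := by
  refine ((integrable_inv_ofReal_add_mul_I_pow hc hn).norm.const_mul (Real.exp (t * c))).mono'
    (Continuous.div (by fun_prop) (by fun_prop) fun v =>
      pow_ne_zero _ (ofReal_add_mul_I_ne_zero hc v)).aestronglyMeasurable
    (Eventually.of_forall fun v => ?_)
  rw [div_eq_mul_inv, norm_mul, norm_exp]
  simp

noncomputable def truncPowExp (c : ℝ) (m : ℕ) : ℝ → ℂ :=
  (Ioi 0).indicator fun x => (x : ℂ) ^ m * cexp (-c * x)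

section TruncPowExp

open FourierTransform

variable {c : ℝ} {m : ℕ}

lemma continuous_truncPowExp (hm : m ≠ 0) : Continuous (truncPowExp c m) := by
  classical
  rw [truncPowExp, ← piecewise_eq_indicator]
  refine Continuous.piecewise (fun x hx => ?_) (by fun_prop) continuous_const
  obtain rfl : x = 0 := by simpa using hx
  simp [hm]

lemma integrable_truncPowExp (hc : 0 < c) (m : ℕ) : Integrable (truncPowExp c m) :=
  (integrable_indicator_iff measurableSet_Ioi).2 <|
    integrableOn_pow_mul_exp_neg_mul (by simpa using hc) m

lemma fourier_truncPowExp (hc : 0 < c) (m : ℕ) (ξ : ℝ) :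
    𝓕 (truncPowExp c m) ξ = m.factorial / ((c : ℂ) + (2 * Real.pi * ξ : ℝ) * I) ^ (m + 1) := by
  rw [Real.fourier_real_eq_integral_exp_smul, ← integral_Ioi_pow_mul_exp_neg_mul (by simp [hc]),
    ← integral_indicator measurableSet_Ioi]
  congr 1 with x
  by_cases hx : x ∈ Ioi 0
  · simp only [truncPowExp, indicator_of_mem hx, smul_eq_mul]
    rw [mul_left_comm, ← Complex.exp_add]
    congr 2
    push_cast
    ring
  · simp [truncPowExp, hx]

lemma integrable_fourier_truncPowExp (hc : 0 < c) (hm : m ≠ 0) :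
    Integrable (𝓕 (truncPowExp c m)) := by
  have h := ((integrable_comp_mul_left_iff _ (by positivity : 2 * Real.pi ≠ 0)).2
    (integrable_inv_ofReal_add_mul_I_pow hc.ne' (by omega : 2 ≤ m + 1))).const_mul
    (m.factorial : ℂ)
  exact h.congr (Eventually.of_forall fun ξ => by rw [fourier_truncPowExp hc, div_eq_mul_inv])

lemma exp_mul_truncPowExp (hm : m ≠ 0) (t : ℝ) :
    cexp (t * c) * truncPowExp c m t = if 0 ≤ t then (t : ℂ) ^ m else 0 := by
  rcases lt_trichotomy t 0 with ht | rfl | ht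
  · simp [truncPowExp, ht.not_gt, ht.not_ge]
  · simp [truncPowExp, hm]
  · rw [if_pos ht.le, truncPowExp, indicator_of_mem (mem_Ioi.2 ht), mul_left_comm,
      ← Complex.exp_add, neg_mul, mul_comm (c : ℂ), add_neg_cancel, Complex.exp_zero, mul_one]

lemma factorial_div_two_pi_mul_integral_exp_mul_div_pow (hc : 0 < c) (hm : m ≠ 0) (t : ℝ) :
    (m.factorial : ℂ) / (2 * Real.pi) *
        ∫ v : ℝ, cexp (t * (c + v * I)) / ((c : ℂ) + v * I) ^ (m + 1) =
      if 0 ≤ t then (t : ℂ) ^ m else 0 := by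
  set g := fun v : ℝ => cexp (t * (c + v * I)) / ((c : ℂ) + v * I) ^ (m + 1)
  have hinv := (integrable_truncPowExp hc m).fourierInv_fourier_eq
    (integrable_fourier_truncPowExp hc hm) (continuous_truncPowExp hm).continuousAt (v := t)
  have hintegrand (ξ : ℝ) : cexp (((2 * Real.pi * inner ℝ ξ t : ℝ) : ℂ) * I) •
      𝓕 (truncPowExp c m) ξ = (m.factorial * cexp (-(t * c))) * g (2 * Real.pi * ξ) := by
    rw [fourier_truncPowExp hc, smul_eq_mul, Real.inner_apply]
    have hexp : cexp (t * (c + (2 * Real.pi * ξ : ℝ) * I)) =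
        cexp (t * c) * cexp ((2 * Real.pi * (ξ * t) : ℝ) * I) := by
      rw [← Complex.exp_add]
      push_cast
      ring_nf
    simp only [g, hexp, Complex.exp_neg]
    field_simp
  rw [Real.fourierInv_eq', funext hintegrand, integral_const_mul, Measure.integral_comp_mul_left,
    abs_of_pos (by positivity)] at hinv
  rw [← exp_mul_truncPowExp hm, ← hinv, Complex.real_smul, Complex.exp_neg]
  push_cast
  field_simp

end TruncPowExp

/-- Lemma 1 of the paper: the Perron-type formula
`(m!/(2πi)) ∫_{c-i∞}^{c+i∞} e^{ts}/s^{m+1} ds = t^m` for `t ≥ 0` and `= 0` for `t < 0`,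
where the vertical integral is understood as a symmetric limit. -/
theorem stmt2 (c : ℝ) (hc : 0 < c) (m : ℕ) (hm : 1 ≤ m) (t : ℝ) :
    Tendsto
      (fun T : ℝ => (m.factorial : ℂ) / (2 * Real.pi * Complex.I) *
        ∫ v in (-T)..T,
          Complex.exp ((t : ℂ) * ((c : ℂ) + (v : ℂ) * Complex.I)) /
            ((c : ℂ) + (v : ℂ) * Complex.I) ^ (m + 1) * Complex.I)
      atTop (𝓝 (if 0 ≤ t then (t : ℂ) ^ m else 0)) := by
  have hlim := (intervalIntegral_tendsto_integral
    (integrable_exp_mul_div_ofReal_add_mul_I_pow hc.ne' (by omega : 2 ≤ m + 1) t)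
    tendsto_neg_atTop_atBot tendsto_id).const_mul ((m.factorial : ℂ) / (2 * Real.pi))
  rw [← factorial_div_two_pi_mul_integral_exp_mul_div_pow hc (by omega) t]
  have hcancelI (J : ℂ) : (m.factorial : ℂ) / (2 * Real.pi) * J =
      m.factorial / (2 * Real.pi * I) * (J * I) := by
    field_simp
  refine hlim.congr fun T => ?_
  rw [id, intervalIntegral.integral_mul_const, hcancelI]
end

section
/- There is an absolute constant C > 0 such that for every integer q ≥ 16^16 and every real δ with 0 ≤ δ < 1, Σ_{p | q} 1/p^{1−δ} ≤ C·(log q)^{δ}·log log log q, where the sum runs over the prime divisors p of q. -/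
/-!
Split the prime divisors of `q` at `x = log q`. A prime `p ≤ x` contributes `p ^ δ / p ≤ x ^ δ / p`,
and `∑_{p ≤ x} 1/p = O(log log x)` by Chebyshev's bound `θ(y) ≤ y log 4` applied on dyadic blocks.
A prime `p > x` contributes at most `x ^ δ / x`, and since `2 ^ ω(q) ≤ q` there are at most
`x / log 2` of them, so together they contribute `O(x ^ δ)`.
-/

open Finset Real Chebyshev

theorem Nat.two_pow_card_primeFactors_le {q : ℕ} (hq : q ≠ 0) : 2 ^ #q.primeFactors ≤ q :=
  (pow_card_le_prod _ _ _ fun _ hp ↦ (prime_of_mem_primeFactors hp).two_le).trans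
    (le_of_dvd (pos_of_ne_zero hq) (prod_primeFactors_dvd q))

theorem card_primeFactors_mul_log_two_le {q : ℕ} (hq : q ≠ 0) :
    #q.primeFactors * log 2 ≤ log q := by
  rw [← log_pow]
  exact log_le_log (by positivity) (by exact_mod_cast Nat.two_pow_card_primeFactors_le hq)

theorem sum_one_div_le_of_dyadic {s : Finset ℕ} {j : ℕ} (hj : 0 < j)
    (hs : ∀ p ∈ s, p.Prime ∧ 2 ^ j ≤ p ∧ p < 2 ^ (j + 1)) :
    ∑ p ∈ s, (1 : ℝ) / p ≤ 4 / j := by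
  set c : ℝ := 2 ^ j * (j * log 2) with hc
  have hterm : ∀ p ∈ s, (1 : ℝ) / p ≤ log p / c := by
    intro p hp
    have hp0 : (0 : ℝ) < p := by exact_mod_cast (hs p hp).1.pos
    have h2j : (2 : ℝ) ^ j ≤ p := by exact_mod_cast (hs p hp).2.1
    have hlogp : j * log 2 ≤ log p := by
      rw [← log_pow]
      exact log_le_log (by positivity) h2j
    rw [div_le_div_iff₀ hp0 (by positivity), one_mul, mul_comm (log _), hc]
    gcongr
  have htheta : ∑ p ∈ s, log (p : ℝ) ≤ θ ((2 ^ (j + 1) : ℕ) : ℝ) := by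
    rw [theta_eq_sum_primesLE_log]
    refine sum_le_sum_of_subset_of_nonneg (fun p hp ↦ ?_) fun p _ _ ↦ log_natCast_nonneg p
    obtain ⟨hpp, -, hlt⟩ := hs p hp
    exact Nat.mem_primesLE.2 ⟨hlt.le, hpp⟩
  calc ∑ p ∈ s, (1 : ℝ) / p ≤ ∑ p ∈ s, log p / c := sum_le_sum hterm
    _ = (∑ p ∈ s, log p) / c := (sum_div ..).symm
    _ ≤ log 4 * 2 ^ (j + 1) / c := by
      gcongr
      exact_mod_cast htheta.trans (theta_le_log4_mul_x (by positivity))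
    _ = 4 / j := by
      rw [hc, show (4 : ℝ) = 2 ^ 2 by norm_num, log_pow]
      field_simp
      ring

theorem sum_primesLE_one_div_le_harmonic (N : ℕ) :
    ∑ p ∈ N.primesLE, (1 : ℝ) / p ≤ 4 * harmonic (Nat.log 2 N) := by
  have hmaps : ∀ p ∈ N.primesLE, Nat.log 2 p ∈ Icc 1 (Nat.log 2 N) := fun p hp ↦ by
    obtain ⟨hpN, hpp⟩ := Nat.mem_primesLE.1 hp
    exact mem_Icc.2 ⟨Nat.log_pos one_lt_two hpp.two_le, Nat.log_mono_right hpN⟩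
  rw [← sum_fiberwise_of_maps_to hmaps, harmonic_eq_sum_Icc]
  push_cast
  rw [mul_sum]
  refine sum_le_sum fun j hj ↦ ?_
  rw [← div_eq_mul_inv]
  refine sum_one_div_le_of_dyadic (mem_Icc.1 hj).1 fun p hp ↦ ?_
  obtain ⟨-, hpp⟩ := Nat.mem_primesLE.1 (mem_filter.1 hp).1
  rw [← (mem_filter.1 hp).2]
  exact ⟨hpp, Nat.pow_log_le_self 2 hpp.ne_zero, Nat.lt_pow_succ_log_self one_lt_two p⟩

theorem log_natLog_two_floor_le {x : ℝ} (hx : 2 ≤ x) :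
    log (Nat.log 2 ⌊x⌋₊) ≤ log (log x) + 1 / 2 := by
  have hN : 2 ≤ ⌊x⌋₊ := Nat.le_floor (by exact_mod_cast hx)
  set J := Nat.log 2 ⌊x⌋₊
  have hJ : 0 < J := Nat.log_pos one_lt_two hN
  have hlog2 : 2 / 3 < log 2 := lt_trans (by norm_num) log_two_gt_d9
  have hlogx : 0 < log x := log_pos (by linarith)
  have hJx : J * log 2 ≤ log x := by
    have h2J : ((2 ^ J : ℕ) : ℝ) ≤ ⌊x⌋₊ := by exact_mod_cast Nat.pow_log_le_self 2 (by omega)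
    push_cast at h2J
    rw [← log_pow]
    exact log_le_log (by positivity) (h2J.trans (Nat.floor_le (by linarith)))
  -- `- log (log 2) = log (log 2)⁻¹ ≤ (log 2)⁻¹ - 1 < 1 / 2`
  have hinv := log_le_sub_one_of_pos (inv_pos.2 (hlog2.trans' (by norm_num)))
  have hinv2 : (log 2)⁻¹ < 3 / 2 := by
    rw [inv_lt_comm₀ (by linarith) (by norm_num)]
    linarith
  rw [log_inv] at hinv
  calc log J ≤ log (log x / log 2) :=
        log_le_log (by exact_mod_cast hJ) ((le_div_iff₀ (by linarith)).2 hJx)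
    _ = log (log x) - log (log 2) := log_div hlogx.ne' (by linarith)
    _ ≤ log (log x) + 1 / 2 := by linarith

theorem sum_primesLE_one_div_le {x : ℝ} (hx : 2 ≤ x) :
    ∑ p ∈ Nat.primesLE ⌊x⌋₊, (1 : ℝ) / p ≤ 6 + 4 * log (log x) := by
  linarith [sum_primesLE_one_div_le_harmonic ⌊x⌋₊, harmonic_le_one_add_log (Nat.log 2 ⌊x⌋₊),
    log_natLog_two_floor_le hx]

theorem one_div_rpow_one_sub_eq {p : ℝ} (hp : 0 < p) (δ : ℝ) : 1 / p ^ (1 - δ) = p ^ δ / p := by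
  rw [rpow_sub hp, rpow_one, one_div_div]

theorem sum_primeFactors_one_div_rpow_le (q : ℕ) {x δ : ℝ} (hx : 0 < x) (hδ0 : 0 ≤ δ)
    (hδ1 : δ ≤ 1) :
    ∑ p ∈ q.primeFactors, 1 / (p : ℝ) ^ (1 - δ) ≤
      x ^ δ * (∑ p ∈ Nat.primesLE ⌊x⌋₊, (1 : ℝ) / p + #q.primeFactors / x) := by
  rw [← sum_filter_add_sum_filter_not q.primeFactors (fun p : ℕ ↦ (p : ℝ) ≤ x), mul_add]
  gcongr ?_ + ?_
  · calc ∑ p ∈ q.primeFactors.filter (fun p : ℕ ↦ (p : ℝ) ≤ x), 1 / (p : ℝ) ^ (1 - δ)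
          ≤ ∑ p ∈ q.primeFactors.filter (fun p : ℕ ↦ (p : ℝ) ≤ x), x ^ δ * (1 / p) := by
          refine sum_le_sum fun p hp ↦ ?_
          obtain ⟨hpq, hpx⟩ := mem_filter.1 hp
          have hp0 : (0 : ℝ) < p := by exact_mod_cast (Nat.prime_of_mem_primeFactors hpq).pos
          rw [one_div_rpow_one_sub_eq hp0, mul_one_div]
          gcongr
      _ ≤ x ^ δ * ∑ p ∈ Nat.primesLE ⌊x⌋₊, (1 : ℝ) / p := by
          rw [← mul_sum]
          refine mul_le_mul_of_nonneg_left ?_ (by positivity)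
          refine sum_le_sum_of_subset_of_nonneg (fun p hp ↦ ?_) fun _ _ _ ↦ by positivity
          obtain ⟨hpq, hpx⟩ := mem_filter.1 hp
          exact Nat.mem_primesLE.2 ⟨Nat.le_floor hpx, Nat.prime_of_mem_primeFactors hpq⟩
  · calc ∑ p ∈ q.primeFactors.filter (fun p : ℕ ↦ ¬(p : ℝ) ≤ x), 1 / (p : ℝ) ^ (1 - δ)
          ≤ #(q.primeFactors.filter fun p : ℕ ↦ ¬(p : ℝ) ≤ x) • (1 / x ^ (1 - δ)) := by
          refine sum_le_card_nsmul _ _ _ fun p hp ↦ ?_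
          have hxp : x ≤ p := (not_le.1 (mem_filter.1 hp).2).le
          gcongr
      _ ≤ x ^ δ * (#q.primeFactors / x) := by
          rw [nsmul_eq_mul, one_div_rpow_one_sub_eq hx, mul_div_left_comm]
          gcongr
          exact filter_subset _ _

/-- Lemma 2 of the paper, second bound:
`Σ_{p ∣ q} 1/p^{1-δ} ≪ (log q)^δ · log log log q` uniformly in `q` and `δ`. -/
theorem stmt4 :
    ∃ C : ℝ, 0 < C ∧ ∀ q : ℕ, 16 ^ 16 ≤ q → ∀ δ : ℝ, 0 ≤ δ → δ < 1 →
      ∑ p ∈ q.primeFactors, 1 / (p : ℝ) ^ (1 - δ) ≤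
        C * Real.log q ^ δ * Real.log (Real.log (Real.log q)) := by
  refine ⟨12, by norm_num, fun q hq δ hδ0 hδ1 ↦ ?_⟩
  set T := log q
  have hq0 : q ≠ 0 := by positivity
  have hlog2 : 0.6931471803 < log 2 := log_two_gt_d9
  have hT : 16 ≤ T := by
    have h : log ((2 : ℝ) ^ 64) ≤ T := log_le_log (by positivity) (by exact_mod_cast hq)
    rw [log_pow] at h
    push_cast at h
    linarith
  have hlogT : 1 ≤ log (log T) := by
    have h16 : log (2 ^ 4 : ℝ) ≤ log T := log_le_log (by norm_num) (by linarith)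
    rw [log_pow] at h16
    push_cast at h16
    rw [le_log_iff_exp_le (by linarith)]
    linarith [exp_one_lt_d9]
  have hω : (#q.primeFactors : ℝ) / T ≤ 3 / 2 := by
    rw [div_le_iff₀ (by linarith)]
    nlinarith [card_primeFactors_mul_log_two_le hq0]
  have hTδ : 0 < T ^ δ := rpow_pos_of_pos (by linarith) δ
  calc ∑ p ∈ q.primeFactors, 1 / (p : ℝ) ^ (1 - δ)
      ≤ T ^ δ * (∑ p ∈ Nat.primesLE ⌊T⌋₊, (1 : ℝ) / p + #q.primeFactors / T) :=
        sum_primeFactors_one_div_rpow_le q (by linarith) hδ0 hδ1.le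
    _ ≤ T ^ δ * (6 + 4 * log (log T) + 3 / 2) := by
        gcongr
        exact sum_primesLE_one_div_le (by linarith)
    _ ≤ 12 * T ^ δ * log (log T) := by nlinarith
end

section
/- Let k ≥ 1 be an integer, A a complex number, and (a_n) a sequence of complex numbers such that Σ_{n ≤ x} a_n = A·(log x)^k / k! + O((log x)^{k−1}) for x ≥ 2. Then for any continuously differentiable function G on [0,1], Σ_{n ≤ x} a_n · G(log(x/n)/log x) = (A·(log x)^k/(k−1)!) · ∫_0^1 (1−t)^{k−1} G(t) dt + O((log x)^{k−1}), where the implied constant depends only on A, k, G, and the implied constant in the hypothesis. -/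
/-!
With `ℓ n = log (x / n) / log x ∈ [0, 1]`, write `G (ℓ n) = G 0 + ∫₀¹ 1[t ≤ ℓ n] G' t dt`.
Since `n ≤ x ^ (1 - t) ↔ t ≤ ℓ n`, summing against `a n` gives
`∑ a n G (ℓ n) = G 0 · S x + ∫₀¹ G' t · S (x ^ (1 - t)) dt` with `S y = ∑_{n ≤ y} a n`.
For `1 ≤ y ≤ x` we have `S y = A (log y) ^ k / k! + O((log x) ^ (k - 1))`, and
`log (x ^ (1 - t)) = (1 - t) log x`; integrating the main term by parts,
`∫₀¹ (1 - t) ^ k G' = k ∫₀¹ (1 - t) ^ (k - 1) G - G 0`, the two `G 0` terms cancel.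
-/

open Set MeasureTheory Real

theorem intervalIntegrable_derivWithin_Icc {E : Type*} [NormedAddCommGroup E]
    [NormedSpace ℝ E] {f : ℝ → E} {a b : ℝ} (hab : a < b) (hf : ContDiffOn ℝ 1 f (Icc a b)) :
    IntervalIntegrable (derivWithin f (Icc a b)) volume a b := by
  refine ContinuousOn.intervalIntegrable ?_
  rw [uIcc_of_le hab.le]
  exact hf.continuousOn_derivWithin (uniqueDiffOn_Icc hab) le_rfl

theorem integral_derivWithin_Icc_eq_sub {E : Type*} [NormedAddCommGroup E] [NormedSpace ℝ E]
    [CompleteSpace E] {f : ℝ → E} {a b y : ℝ} (hab : a < b) (hf : ContDiffOn ℝ 1 f (Icc a b))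
    (hy : y ∈ Icc a b) :
    ∫ t in a..y, derivWithin f (Icc a b) t = f y - f a := by
  have hsub : Icc a y ⊆ Icc a b := Icc_subset_Icc le_rfl hy.2
  refine intervalIntegral.integral_eq_sub_of_hasDerivAt_of_le hy.1 (hf.continuousOn.mono hsub)
    (fun t ht => ?_) ?_
  · have ht' : t ∈ Ioo a b := ⟨ht.1, ht.2.trans_le hy.2⟩
    exact (hf.differentiableOn one_ne_zero t (Ioo_subset_Icc_self ht')).hasDerivWithinAt.hasDerivAt
      (Icc_mem_nhds ht'.1 ht'.2)
  · refine (intervalIntegrable_derivWithin_Icc hab hf).mono_set ?_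
    rw [uIcc_of_le hy.1, uIcc_of_le hab.le]
    exact hsub

theorem intervalIntegrable_ofReal_derivWithin_Icc {f : ℝ → ℝ} {a b : ℝ} (hab : a < b)
    (hf : ContDiffOn ℝ 1 f (Icc a b)) :
    IntervalIntegrable (fun t => ((derivWithin f (Icc a b) t : ℝ) : ℂ)) volume a b :=
  have h := intervalIntegrable_derivWithin_Icc hab hf
  ⟨h.1.ofReal, h.2.ofReal⟩

theorem integral_one_sub_pow_succ_mul_derivWithin (k : ℕ) {G : ℝ → ℝ}
    (hG : ContDiffOn ℝ 1 G (Icc 0 1)) :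
    ∫ t in (0:ℝ)..1, (1 - t) ^ (k + 1) * derivWithin G (Icc 0 1) t =
      (k + 1) * (∫ t in (0:ℝ)..1, (1 - t) ^ k * G t) - G 0 := by
  have hu : ∀ t ∈ uIcc (0:ℝ) 1, HasDerivWithinAt (fun t : ℝ => (1 - t) ^ (k + 1))
      (-((k + 1) * (1 - t) ^ k)) (uIcc 0 1) t := fun t _ => by
    simpa using (((hasDerivAt_id t).const_sub 1).fun_pow (k + 1)).hasDerivWithinAt
  have hv : ∀ t ∈ uIcc (0:ℝ) 1, HasDerivWithinAt G (derivWithin G (Icc 0 1) t) (uIcc 0 1) t :=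
    fun t ht => by
      rw [uIcc_of_le zero_le_one] at ht ⊢
      exact (hG.differentiableOn one_ne_zero t ht).hasDerivWithinAt
  have hu' : IntervalIntegrable (fun t : ℝ => -((k + 1) * (1 - t) ^ k)) volume 0 1 :=
    (by fun_prop : Continuous fun t : ℝ => -((k + 1) * (1 - t) ^ k)).intervalIntegrable _ _
  rw [intervalIntegral.integral_mul_deriv_eq_deriv_mul_of_hasDerivWithinAt hu hv hu'
    (intervalIntegrable_derivWithin_Icc zero_lt_one hG)]
  simp only [neg_mul, intervalIntegral.integral_neg, mul_assoc, intervalIntegral.integral_const_mul,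
    sub_self, sub_zero, one_pow, zero_pow k.succ_ne_zero, zero_mul, one_mul]
  ring

theorem mul_sum_filter_le_eq_sum_indicator {R ι : Type*} [CommRing R] (s : Finset ι)
    (c : ι → R) (ℓ : ι → ℝ) (g : ℝ → R) (t : ℝ) :
    g t * ∑ i ∈ s with t ≤ ℓ i, c i = ∑ i ∈ s, c i * {u | u ≤ ℓ i}.indicator g t := by
  rw [Finset.sum_filter, Finset.mul_sum]
  refine Finset.sum_congr rfl fun i _ => ?_
  by_cases h : t ≤ ℓ i <;> simp [h, mul_comm]

section

variable {𝕜 ι : Type*} [RCLike 𝕜] (s : Finset ι) (c : ι → 𝕜) (ℓ : ι → ℝ) {g : ℝ → 𝕜} {a b : ℝ}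

theorem intervalIntegrable_indicator_le (hg : IntervalIntegrable g volume a b) (r : ℝ) :
    IntervalIntegrable ({u | u ≤ r}.indicator g) volume a b := by
  rw [intervalIntegrable_iff] at hg ⊢
  exact hg.indicator measurableSet_Iic

theorem intervalIntegrable_mul_sum_filter_le (hg : IntervalIntegrable g volume a b) :
    IntervalIntegrable (fun t => g t * ∑ i ∈ s with t ≤ ℓ i, c i) volume a b := by
  simp_rw [mul_sum_filter_le_eq_sum_indicator]
  rw [← Finset.sum_fn]
  exact IntervalIntegrable.sum s fun i _ => (intervalIntegrable_indicator_le hg (ℓ i)).const_mul _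

theorem integral_mul_sum_filter_le (hg : IntervalIntegrable g volume a b)
    (hℓ : ∀ i ∈ s, ℓ i ∈ Icc a b) :
    ∫ t in a..b, g t * ∑ i ∈ s with t ≤ ℓ i, c i = ∑ i ∈ s, c i * ∫ t in a..ℓ i, g t := by
  simp_rw [mul_sum_filter_le_eq_sum_indicator]
  rw [intervalIntegral.integral_finsetSum fun i _ =>
    (intervalIntegrable_indicator_le hg (ℓ i)).const_mul _]
  refine Finset.sum_congr rfl fun i hi => ?_
  rw [intervalIntegral.integral_const_mul, intervalIntegral.integral_indicator (hℓ i hi)]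

end

noncomputable def partialSum (a : ℕ → ℂ) (y : ℝ) : ℂ := ∑ n ∈ Finset.Icc 1 ⌊y⌋₊, a n

theorem le_rpow_one_sub_iff_le_log_div_log {x y t : ℝ} (hx : 1 < x) (hy : 0 < y) :
    y ≤ x ^ (1 - t) ↔ t ≤ log (x / y) / log x := by
  rw [le_rpow_iff_log_le hy (by linarith), le_div_iff₀ (log_pos hx),
    log_div (by positivity) hy.ne']
  constructor <;> intro h <;> linarith

theorem partialSum_rpow_one_sub (a : ℕ → ℂ) {x t : ℝ} (hx : 1 < x) (ht : 0 ≤ t) :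
    partialSum a (x ^ (1 - t)) =
      ∑ n ∈ Finset.Icc 1 ⌊x⌋₊ with t ≤ log (x / ((n : ℕ) : ℝ)) / log x, a n := by
  unfold partialSum
  congr 1
  ext n
  simp only [Finset.mem_filter, Finset.mem_Icc]
  refine ⟨fun ⟨h1, h2⟩ => ?_, fun ⟨⟨h1, _⟩, h3⟩ => ⟨h1, ?_⟩⟩
  all_goals have hn : (0 : ℝ) < n := Nat.cast_pos.2 h1
  · rw [Nat.le_floor_iff (by positivity)] at h2
    exact ⟨⟨h1, Nat.le_floor (h2.trans (rpow_le_self_of_one_le hx.le (by linarith)))⟩,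
      (le_rpow_one_sub_iff_le_log_div_log hx hn).1 h2⟩
  · exact Nat.le_floor ((le_rpow_one_sub_iff_le_log_div_log hx hn).2 h3)

section WeightedSum

variable (a : ℕ → ℂ) {G : ℝ → ℝ} {x : ℝ}

theorem intervalIntegrable_derivWithin_mul_partialSum_rpow (hG : ContDiffOn ℝ 1 G (Icc 0 1))
    (hx : 1 < x) :
    IntervalIntegrable (fun t => ((derivWithin G (Icc 0 1) t : ℝ) : ℂ) * partialSum a (x ^ (1 - t)))
      volume 0 1 := by
  have hg := intervalIntegrable_ofReal_derivWithin_Icc zero_lt_one hG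
  refine (intervalIntegrable_congr fun t ht => ?_).2
    (intervalIntegrable_mul_sum_filter_le (Finset.Icc 1 ⌊x⌋₊) a (fun n => log (x / n) / log x) hg)
  rw [uIoc_of_le zero_le_one] at ht
  rw [partialSum_rpow_one_sub a hx ht.1.le]

theorem sum_mul_comp_log_div_log_eq (hG : ContDiffOn ℝ 1 G (Icc 0 1)) (hx : 1 < x) :
    ∑ n ∈ Finset.Icc 1 ⌊x⌋₊, a n * (G (log (x / n) / log x) : ℂ) =
      G 0 * partialSum a x +
        ∫ t in (0:ℝ)..1, ((derivWithin G (Icc 0 1) t : ℝ) : ℂ) * partialSum a (x ^ (1 - t)) := by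
  have hg := intervalIntegrable_ofReal_derivWithin_Icc zero_lt_one hG
  have hℓ : ∀ n ∈ Finset.Icc 1 ⌊x⌋₊, log (x / n) / log x ∈ Icc (0:ℝ) 1 := by
    intro n hn
    rw [Finset.mem_Icc] at hn
    have hn1 : (1 : ℝ) ≤ n := Nat.one_le_cast.2 hn.1
    have hnx : (n : ℝ) ≤ x := (Nat.le_floor_iff (by linarith)).1 hn.2
    rw [mem_Icc, le_div_iff₀ (log_pos hx), div_le_one (log_pos hx),
      log_div (by linarith) (by linarith)]
    constructor <;> nlinarith [log_nonneg hn1, log_le_log (by linarith) hnx]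
  have hS : EqOn (fun t => ((derivWithin G (Icc 0 1) t : ℝ) : ℂ) * partialSum a (x ^ (1 - t)))
      (fun t => ((derivWithin G (Icc 0 1) t : ℝ) : ℂ) *
        ∑ n ∈ Finset.Icc 1 ⌊x⌋₊ with t ≤ log (x / ((n : ℕ) : ℝ)) / log x, a n) (uIcc 0 1) := by
    intro t ht
    rw [uIcc_of_le zero_le_one] at ht
    simp only [partialSum_rpow_one_sub a hx ht.1]
  rw [intervalIntegral.integral_congr hS, integral_mul_sum_filter_le _ _ _ hg hℓ, partialSum,
    Finset.mul_sum, ← Finset.sum_add_distrib]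
  refine Finset.sum_congr rfl fun n hn => ?_
  rw [intervalIntegral.integral_ofReal, integral_derivWithin_Icc_eq_sub zero_lt_one hG (hℓ n hn)]
  push_cast
  ring

theorem sum_mul_comp_log_div_log_sub_eq (k : ℕ) (A : ℂ) (hG : ContDiffOn ℝ 1 G (Icc 0 1))
    (hx : 1 < x) :
    (∑ n ∈ Finset.Icc 1 ⌊x⌋₊, a n * (G (log (x / n) / log x) : ℂ)) -
        A * (log x : ℂ) ^ (k + 1) / (k.factorial : ℂ) *
          ((∫ t in (0:ℝ)..1, (1 - t) ^ k * G t : ℝ) : ℂ) =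
      G 0 * (partialSum a x - A * (log x : ℂ) ^ (k + 1) / ((k + 1).factorial : ℂ)) +
        ∫ t in (0:ℝ)..1, ((derivWithin G (Icc 0 1) t : ℝ) : ℂ) *
          (partialSum a (x ^ (1 - t)) - A * (log (x ^ (1 - t)) : ℂ) ^ (k + 1) /
            ((k + 1).factorial : ℂ)) := by
  have hmain : ∀ t : ℝ, ((derivWithin G (Icc 0 1) t : ℝ) : ℂ) *
      (A * (log (x ^ (1 - t)) : ℂ) ^ (k + 1) / ((k + 1).factorial : ℂ)) =
        A * (log x : ℂ) ^ (k + 1) / ((k + 1).factorial : ℂ) *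
          (((1 - t) ^ (k + 1) * derivWithin G (Icc 0 1) t : ℝ) : ℂ) := fun t => by
    rw [log_rpow (by linarith), Complex.ofReal_mul, mul_pow]
    push_cast
    ring
  have hmain_int : IntervalIntegrable (fun t => ((derivWithin G (Icc 0 1) t : ℝ) : ℂ) *
      (A * (log (x ^ (1 - t)) : ℂ) ^ (k + 1) / ((k + 1).factorial : ℂ))) volume 0 1 := by
    simp only [hmain]
    refine ContinuousOn.intervalIntegrable (continuousOn_const.mul
      (Complex.continuous_ofReal.comp_continuousOn (ContinuousOn.mul (by fun_prop) ?_)))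
    rw [uIcc_of_le zero_le_one]
    exact hG.continuousOn_derivWithin (uniqueDiffOn_Icc zero_lt_one) le_rfl
  simp_rw [mul_sub]
  rw [intervalIntegral.integral_sub
      (intervalIntegrable_derivWithin_mul_partialSum_rpow a hG hx) hmain_int,
    sum_mul_comp_log_div_log_eq a hG hx]
  simp_rw [hmain]
  rw [intervalIntegral.integral_const_mul, intervalIntegral.integral_ofReal,
    integral_one_sub_pow_succ_mul_derivWithin k hG, Nat.factorial_succ]
  push_cast
  field_simp
  ring

end WeightedSum

theorem norm_integral_mul_comp_rpow_one_sub_le {g : ℝ → ℝ} {e : ℝ → ℂ} {x M C : ℝ}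
    (hx : 1 ≤ x) (hg : ∀ t ∈ Icc (0:ℝ) 1, ‖g t‖ ≤ M) (he : ∀ y, 1 ≤ y → y ≤ x → ‖e y‖ ≤ C) :
    ‖∫ t in (0:ℝ)..1, (g t : ℂ) * e (x ^ (1 - t))‖ ≤ M * C := by
  have hM : 0 ≤ M := (norm_nonneg _).trans (hg 0 ⟨le_rfl, zero_le_one⟩)
  have hbound : ∀ t ∈ uIoc (0:ℝ) 1, ‖(g t : ℂ) * e (x ^ (1 - t))‖ ≤ M * C := by
    intro t ht
    rw [uIoc_of_le zero_le_one] at ht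
    rw [norm_mul, Complex.norm_real]
    exact mul_le_mul (hg t (Ioc_subset_Icc_self ht))
      (he _ (one_le_rpow hx (by linarith [ht.2])) (rpow_le_self_of_one_le hx (by linarith [ht.1])))
      (norm_nonneg _) hM
  simpa using intervalIntegral.norm_integral_le_of_norm_le_const hbound

theorem exists_norm_partialSum_sub_le (a : ℕ → ℂ) (A : ℂ) (k m : ℕ) (C₀ : ℝ)
    (ha : ∀ x : ℝ, 2 ≤ x →
      ‖partialSum a x - A * (log x : ℂ) ^ k / (k.factorial : ℂ)‖ ≤ C₀ * log x ^ m) :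
    ∃ C, 0 ≤ C ∧ ∀ x y : ℝ, 2 ≤ x → 1 ≤ y → y ≤ x →
      ‖partialSum a y - A * (log y : ℂ) ^ k / (k.factorial : ℂ)‖ ≤ C * log x ^ m := by
  set B := (‖a 1‖ + ‖A‖) / log 2 ^ m
  refine ⟨max C₀ 0 + B, by positivity, fun x y hx hy hyx => ?_⟩
  have hlogy : 0 ≤ log y := log_nonneg hy
  have hlogx : log y ≤ log x := log_le_log (by linarith) hyx
  have hlog2 : 0 < log 2 := log_pos one_lt_two
  have hB : 0 ≤ B := by positivity
  have hlogxm : 0 ≤ log x ^ m := pow_nonneg (hlogy.trans hlogx) m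
  rcases le_or_gt 2 y with hy2 | hy2
  · calc _ ≤ C₀ * log y ^ m := ha y hy2
      _ ≤ max C₀ 0 * log x ^ m := by gcongr; exact le_max_left _ _
      _ ≤ (max C₀ 0 + B) * log x ^ m := by gcongr; linarith
  · have hS : partialSum a y = a 1 := by
      have hfloor : ⌊y⌋₊ = 1 := by
        rw [Nat.floor_eq_iff (by linarith)]
        norm_num
        exact ⟨hy, hy2⟩
      simp [partialSum, hfloor]
    have hlogy1 : log y ≤ 1 := by linarith [log_le_sub_one_of_pos (by linarith : 0 < y)]
    have hmain : ‖A * (log y : ℂ) ^ k / (k.factorial : ℂ)‖ ≤ ‖A‖ := by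
      rw [norm_div, norm_mul, norm_pow, Complex.norm_real, Complex.norm_natCast,
        Real.norm_of_nonneg hlogy]
      calc ‖A‖ * log y ^ k / k.factorial ≤ ‖A‖ * log y ^ k :=
            div_le_self (by positivity) (Nat.one_le_cast.2 k.factorial_pos)
        _ ≤ ‖A‖ := mul_le_of_le_one_right (norm_nonneg _) (pow_le_one₀ hlogy hlogy1)
    calc _ ≤ ‖a 1‖ + ‖A‖ := by rw [hS]; exact (norm_sub_le _ _).trans (by gcongr)
      _ = B * log 2 ^ m := (div_mul_cancel₀ _ (by positivity)).symm
      _ ≤ B * log x ^ m := by gcongr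
      _ ≤ (max C₀ 0 + B) * log x ^ m := by gcongr; exact le_add_of_nonneg_left (le_max_right _ _)

/-- Lemma 5 of the paper (Lemma 4 of Goldston–Pintz–Yıldırım): weighted partial
summation against a `C¹` weight `G`. -/
theorem stmt6 (k : ℕ) (hk : 1 ≤ k) (A : ℂ) (a : ℕ → ℂ) (C₀ : ℝ)
    (ha : ∀ x : ℝ, 2 ≤ x →
      ‖(∑ n ∈ Finset.Icc 1 ⌊x⌋₊, a n) - A * (Real.log x) ^ k / (k.factorial : ℂ)‖ ≤
        C₀ * Real.log x ^ (k - 1))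
    (G : ℝ → ℝ) (hG : ContDiffOn ℝ 1 G (Set.Icc 0 1)) :
    ∃ C : ℝ, 0 < C ∧ ∀ x : ℝ, 2 ≤ x →
      ‖(∑ n ∈ Finset.Icc 1 ⌊x⌋₊,
            a n * (G (Real.log (x / n) / Real.log x) : ℂ)) -
          A * (Real.log x) ^ k / ((k - 1).factorial : ℂ) *
            ((∫ t in (0:ℝ)..1, (1 - t) ^ (k - 1) * G t : ℝ) : ℂ)‖ ≤
        C * Real.log x ^ (k - 1) := by
  obtain ⟨k, rfl⟩ : ∃ m, k = m + 1 := ⟨k - 1, by omega⟩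
  simp only [add_tsub_cancel_right] at ha ⊢
  obtain ⟨C₁, hC₁, hS⟩ := exists_norm_partialSum_sub_le a A (k + 1) k C₀ ha
  obtain ⟨M, hM⟩ := isCompact_Icc.exists_bound_of_continuousOn
    (hG.continuousOn_derivWithin (uniqueDiffOn_Icc zero_lt_one) le_rfl)
  have hM0 : 0 ≤ M := (norm_nonneg _).trans (hM 0 ⟨le_rfl, zero_le_one⟩)
  refine ⟨(|G 0| + M) * C₁ + 1, by positivity, fun x hx => ?_⟩
  have hLk : 0 ≤ log x ^ k := pow_nonneg (log_nonneg (by linarith)) k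
  rw [sum_mul_comp_log_div_log_sub_eq a k A hG (by linarith)]
  refine (norm_add_le _ _).trans ((add_le_add (b := |G 0| * (C₁ * log x ^ k)) ?_
    (norm_integral_mul_comp_rpow_one_sub_le (by linarith) hM fun y => hS x y hx)).trans ?_)
  · rw [norm_mul, Complex.norm_real, Real.norm_eq_abs]
    exact mul_le_mul_of_nonneg_left (hS x x hx (by linarith) le_rfl) (abs_nonneg _)
  · nlinarith
end

section
/- Let k be an integer, θ > 0, and let g : ℕ → ℝ be a multiplicative function supported on squarefree numbers such that g(p) = k/p + O(p^{-1-θ}) for all primes p (outside the divisors of a modulus q). Then for every δ with 0 < δ < min(θ, 1/2) there is a constant B (independent of q) such that for all complex s with Re(s) ≥ −δ, the infinite product Π_{p ∤ q} (1 + g(p)/p^s)(1 − 1/p^{s+1})^k converges absolutely and its modulus is at most B, uniformly in q and in s with Re(s) ≥ −δ. -/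
open scoped Classical

/-- `g` is a multiplicative function supported on squarefree numbers. -/
def MultSF (g : ℕ → ℝ) : Prop :=
  g 1 = 1 ∧ (∀ m n : ℕ, Nat.Coprime m n → g (m * n) = g m * g n) ∧
    ∀ n : ℕ, ¬ Squarefree n → g n = 0

/-!
With `u = g(p)/p^s` and `v = p^{-s-1}`, the Euler factor is `(1 + u)(1 - v)^k`. Since
`(1 - v)^k = 1 - k v + O(|v|²)` uniformly for `|v| ≤ 3/4`, and `u - k v = (g(p) - k/p)/p^s`, the
factor is `1 + O(p^{δ-1-θ} + p^{2δ-2})` with a constant depending only on `k`, `θ`, `δ`, `C_g`.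
Both exponents are `< -1`, so the errors are dominated by a convergent series over all integers,
and `‖∏ (1 + a_p)‖ ≤ exp (∑ ‖a_p‖)` gives the bound.
-/

open Asymptotics Filter Metric

section FirstOrder

variable {𝕜 : Type*} [NormedField 𝕜] {ρ : ℝ}

lemma isBigO_id_one_closedBall :
    (fun v : 𝕜 => v) =O[𝓟 (closedBall 0 ρ)] (fun _ => (1 : 𝕜)) :=
  isBigO_principal.2 ⟨ρ, fun v hv => by simpa using hv⟩

lemma isBigO_one_of_isBigO_sub_one_add {f : 𝕜 → 𝕜} {c : 𝕜}
    (hf : (fun v => f v - 1 + c * v) =O[𝓟 (closedBall 0 ρ)] (· ^ 2)) :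
    f =O[𝓟 (closedBall 0 ρ)] (fun _ => (1 : 𝕜)) := by
  have hv := isBigO_id_one_closedBall (𝕜 := 𝕜) (ρ := ρ)
  have hsq : (fun v : 𝕜 => v ^ 2) =O[𝓟 (closedBall 0 ρ)] (fun _ => (1 : 𝕜)) := by
    simpa [sq] using hv.mul hv
  simpa using (hf.trans hsq).add ((isBigO_refl (fun _ => (1 : 𝕜)) _).sub (hv.const_mul_left c))

lemma isBigO_mul_sub_one_add {f g : 𝕜 → 𝕜} {c d : 𝕜}
    (hf : (fun v => f v - 1 + c * v) =O[𝓟 (closedBall 0 ρ)] (· ^ 2))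
    (hg : (fun v => g v - 1 + d * v) =O[𝓟 (closedBall 0 ρ)] (· ^ 2)) :
    (fun v => f v * g v - 1 + (c + d) * v) =O[𝓟 (closedBall 0 ρ)] (· ^ 2) := by
  have hv := isBigO_id_one_closedBall (𝕜 := 𝕜) (ρ := ρ)
  have h₁ : (fun v => (f v - 1 + c * v) * g v) =O[𝓟 (closedBall 0 ρ)] (· ^ 2) := by
    simpa using hf.mul (isBigO_one_of_isBigO_sub_one_add hg)
  have h₂ : (fun v => (g v - 1 + d * v) * (1 - c * v)) =O[𝓟 (closedBall 0 ρ)] (· ^ 2) := by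
    simpa using hg.mul ((isBigO_refl (fun _ => (1 : 𝕜)) _).sub (hv.const_mul_left c))
  have h₃ : (fun v => c * d * v ^ 2) =O[𝓟 (closedBall 0 ρ)] (· ^ 2) :=
    (isBigO_refl _ _).const_mul_left _
  refine ((h₁.add h₂).add h₃).congr_left fun v => ?_
  ring

lemma isBigO_inv_one_sub_sub_one_add (hρ : ρ < 1) :
    (fun v : 𝕜 => (1 - v)⁻¹ - 1 + (-1) * v) =O[𝓟 (closedBall 0 ρ)] (· ^ 2) := by
  refine isBigO_principal.2 ⟨(1 - ρ)⁻¹, fun v hv => ?_⟩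
  have hv : ‖v‖ ≤ ρ := by simpa using hv
  have hlow : 1 - ρ ≤ ‖1 - v‖ := by
    have := norm_sub_norm_le (1 : 𝕜) v
    rw [norm_one] at this
    linarith
  have hne : 1 - v ≠ 0 := norm_pos_iff.1 (by linarith)
  calc ‖(1 - v)⁻¹ - 1 + -1 * v‖ = ‖v ^ 2‖ * ‖1 - v‖⁻¹ := by
        rw [← norm_inv, ← norm_mul]
        congr 1
        field_simp
        ring
    _ ≤ (1 - ρ)⁻¹ * ‖v ^ 2‖ := by
        rw [mul_comm]
        gcongr

lemma isBigO_one_sub_zpow_sub_one_add (hρ : ρ < 1) (k : ℤ) :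
    (fun v : 𝕜 => (1 - v) ^ k - 1 + k * v) =O[𝓟 (closedBall 0 ρ)] (· ^ 2) := by
  have hne : ∀ v ∈ closedBall (0 : 𝕜) ρ, 1 - v ≠ 0 := fun v hv => sub_ne_zero.2 fun h => by
    rw [mem_closedBall_zero_iff, ← h, norm_one] at hv
    linarith
  induction k using Int.induction_on with
  | zero => simpa using isBigO_zero _ _
  | succ k ih =>
    have h1 : (fun v : 𝕜 => (1 - v) - 1 + 1 * v) =O[𝓟 (closedBall 0 ρ)] (· ^ 2) := by
      simpa using isBigO_zero (fun v : 𝕜 => v ^ 2) _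
    refine (isBigO_mul_sub_one_add ih h1).congr' ?_ EventuallyEq.rfl
    filter_upwards [mem_principal_self _] with v hv
    rw [zpow_add_one₀ (hne v hv)]
    push_cast
    ring
  | pred k ih =>
    refine (isBigO_mul_sub_one_add ih (isBigO_inv_one_sub_sub_one_add hρ)).congr' ?_
      EventuallyEq.rfl
    filter_upwards [mem_principal_self _] with v hv
    rw [zpow_sub_one₀ (hne v hv)]
    push_cast
    ring

end FirstOrder

lemma norm_one_add_mul_sub_one_le {R : Type*} [SeminormedCommRing R] [NormOneClass R]
    {u v X c : R} {M C t e : ℝ} (hM : 0 ≤ M) (hC : 0 ≤ C) (ht0 : 0 ≤ t) (ht1 : t ≤ 1)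
    (hu : ‖u‖ ≤ M * t) (hv : ‖v‖ ≤ t) (huv : ‖u - c * v‖ ≤ e) (hX : ‖X - 1 + c * v‖ ≤ C * t ^ 2) :
    ‖(1 + u) * X - 1‖ ≤ e + ((1 + M) * C + M * ‖c‖) * t ^ 2 := by
  calc ‖(1 + u) * X - 1‖ = ‖(u - c * v) + (1 + u) * (X - 1 + c * v) - u * (c * v)‖ := by
        ring_nf
    _ ≤ e + (1 + M * t) * (C * t ^ 2) + M * t * (‖c‖ * t) := by
        grw [norm_sub_le, norm_add_le, norm_mul_le, norm_mul_le, norm_mul_le, norm_add_le,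
          norm_one, huv, hX, hu, hv]
    _ ≤ e + ((1 + M) * C + M * ‖c‖) * t ^ 2 := by
        nlinarith [mul_nonneg (mul_nonneg hC hM) (mul_nonneg (sq_nonneg t) (sub_nonneg.2 ht1))]

lemma norm_div_natCast_cpow_le {n : ℕ} (hn : 1 ≤ n) (z : ℂ) {s : ℂ} {δ : ℝ}
    (hs : -δ ≤ s.re) : ‖z / (n : ℂ) ^ s‖ ≤ ‖z‖ * (n : ℝ) ^ δ := by
  rw [norm_div, Complex.norm_natCast_cpow_of_pos hn, div_eq_mul_inv,
    ← Real.rpow_neg (Nat.cast_nonneg _)]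
  gcongr
  · exact_mod_cast hn
  · exact neg_le.1 hs

lemma exists_norm_eulerFactor_sub_one_le (k : ℤ) {θ δ Cg : ℝ} (hθ : 0 ≤ θ)
    (hδ : δ < 1 / 2) (hCg : 0 ≤ Cg) :
    ∃ A, 0 ≤ A ∧ ∀ n : ℕ, 2 ≤ n → ∀ a : ℝ, |a - k / n| ≤ Cg / (n : ℝ) ^ (1 + θ) →
      ∀ s : ℂ, -δ ≤ s.re →
        ‖(1 + (a : ℂ) / (n : ℂ) ^ s) * (1 - 1 / (n : ℂ) ^ (s + 1)) ^ k - 1‖ ≤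
          A * (n : ℝ) ^ max (δ - 1 - θ) (2 * (δ - 1)) := by
  obtain ⟨C, hC0, hC⟩ :=
    (isBigO_one_sub_zpow_sub_one_add (𝕜 := ℂ) (ρ := 3 / 4) (by norm_num) k).exists_nonneg
  rw [isBigOWith_principal] at hC
  set M := |(k : ℝ)| + Cg
  refine ⟨Cg + ((1 + M) * C + M * |(k : ℝ)|), by positivity, fun n hn a ha s hs => ?_⟩
  have hn2 : (2 : ℝ) ≤ n := by exact_mod_cast hn
  have hn0 : (0 : ℝ) < n := by linarith
  have hpow_succ : (n : ℂ) ^ (s + 1) = (n : ℂ) ^ s * n := by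
    rw [Complex.cpow_add _ _ (by exact_mod_cast (by omega : n ≠ 0)), Complex.cpow_one]
  set t := (n : ℝ) ^ (δ - 1) with ht_def
  have ht2 : t ^ 2 = (n : ℝ) ^ (2 * (δ - 1)) := by
    rw [← Real.rpow_natCast, ← Real.rpow_mul hn0.le]
    ring_nf
  have ht34 : t ≤ 3 / 4 := by
    have : t ^ 2 ≤ 1 / 2 := by
      rw [ht2]
      calc (n : ℝ) ^ (2 * (δ - 1)) ≤ (n : ℝ) ^ (-1 : ℝ) := by gcongr <;> linarith
        _ ≤ 1 / 2 := by rw [Real.rpow_neg_one, one_div]; gcongr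
    nlinarith [show 0 ≤ t by positivity]
  have hu : ‖(a : ℂ) / (n : ℂ) ^ s‖ ≤ M * t := by
    have ha' : |a| ≤ M / n := by
      have : Cg / (n : ℝ) ^ (1 + θ) ≤ Cg / n := by
        gcongr
        exact Real.self_le_rpow_of_one_le (by linarith) (by linarith)
      have := abs_sub_abs_le_abs_sub a (k / n)
      rw [abs_div, abs_of_pos hn0] at this
      rw [add_div]
      linarith
    grw [norm_div_natCast_cpow_le (by omega) _ hs, Complex.norm_real, Real.norm_eq_abs, ha',
      ht_def, Real.rpow_sub_one hn0.ne', div_mul_eq_mul_div, mul_div_assoc]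
  have hv : ‖1 / (n : ℂ) ^ (s + 1)‖ ≤ t := by
    grw [show 1 / (n : ℂ) ^ (s + 1) = ((1 / n : ℝ) : ℂ) / (n : ℂ) ^ s by
        rw [hpow_succ]; push_cast; field_simp,
      norm_div_natCast_cpow_le (by omega) _ hs, Complex.norm_real, Real.norm_eq_abs,
      abs_of_pos (by positivity), ht_def, Real.rpow_sub_one hn0.ne', one_div_mul_eq_div]
  have huv : ‖(a : ℂ) / (n : ℂ) ^ s - k * (1 / (n : ℂ) ^ (s + 1))‖ ≤
      Cg * (n : ℝ) ^ (δ - 1 - θ) := by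
    grw [show (a : ℂ) / (n : ℂ) ^ s - k * (1 / (n : ℂ) ^ (s + 1)) =
          ((a - k / n : ℝ) : ℂ) / (n : ℂ) ^ s by rw [hpow_succ]; push_cast; field_simp,
      norm_div_natCast_cpow_le (by omega) _ hs, Complex.norm_real, Real.norm_eq_abs, ha,
      show δ - 1 - θ = δ - (1 + θ) by ring, Real.rpow_sub hn0, div_mul_eq_mul_div, mul_div_assoc]
  have hX := hC _ (mem_closedBall_zero_iff.2 (hv.trans ht34))
  rw [norm_pow] at hX
  grw [norm_one_add_mul_sub_one_le (by positivity) hC0 (by positivity) (by linarith) hu hv huv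
    (hX.trans (by gcongr)), Complex.norm_intCast, ht2, add_mul Cg]
  gcongr <;> first | linarith | exact le_max_left _ _ | exact le_max_right _ _

lemma norm_tprod_one_add_le_exp {ι R : Type*} [NormedCommRing R] [NormOneClass R] [CompleteSpace R]
    {f : ι → R} (hf : Summable fun i => ‖f i‖) :
    ‖∏' i, (1 + f i)‖ ≤ Real.exp (∑' i, ‖f i‖) := by
  refine le_of_tendsto' (Tendsto.norm (multipliable_one_add_of_summable hf).hasProd) fun t => ?_
  calc ‖∏ i ∈ t, (1 + f i)‖ ≤ ∏ i ∈ t, (1 + ‖f i‖) := by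
        grw [Finset.norm_prod_le]
        gcongr with i
        grw [norm_add_le, norm_one]
    _ ≤ Real.exp (∑ i ∈ t, ‖f i‖) := Real.prod_one_add_le_exp_sum t fun i => norm_nonneg _
    _ ≤ Real.exp (∑' i, ‖f i‖) := by
        gcongr
        exact hf.sum_le_tsum t fun i _ => norm_nonneg _

theorem stmt7_general (k : ℤ) (θ δ Cg : ℝ) (hθ : 0 < θ)
    (hδ : δ < min θ (1 / 2)) (hCg : 0 < Cg) :
    ∃ B : ℝ, 0 < B ∧ ∀ q : ℕ, 0 < q → ∀ g : ℕ → ℝ, MultSF g →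
      (∀ p : ℕ, p.Prime → ¬ p ∣ q → |g p - k / p| ≤ Cg / (p : ℝ) ^ (1 + θ)) →
      ∀ s : ℂ, -δ ≤ s.re →
        Summable (fun p : {p : ℕ // p.Prime ∧ ¬ p ∣ q} =>
          ‖(1 + ((g p : ℝ) : ℂ) / ((p : ℕ) : ℂ) ^ s) *
              (1 - 1 / ((p : ℕ) : ℂ) ^ (s + 1)) ^ k - 1‖) ∧
        ‖∏' p : {p : ℕ // p.Prime ∧ ¬ p ∣ q},
            (1 + ((g p : ℝ) : ℂ) / ((p : ℕ) : ℂ) ^ s) *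
              (1 - 1 / ((p : ℕ) : ℂ) ^ (s + 1)) ^ k‖ ≤ B := by
  obtain ⟨hδθ, hδ_half⟩ := lt_min_iff.1 hδ
  obtain ⟨A, hA0, hA⟩ := exists_norm_eulerFactor_sub_one_le k hθ.le hδ_half hCg.le
  set r := max (δ - 1 - θ) (2 * (δ - 1))
  have hZ : Summable fun n : ℕ => A * (n : ℝ) ^ r :=
    (Real.summable_nat_rpow.2 (max_lt (by linarith) (by linarith))).mul_left A
  refine ⟨Real.exp (∑' n : ℕ, A * (n : ℝ) ^ r), Real.exp_pos _, fun q _ g _ hg s hs => ?_⟩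
  have hbound := fun p : {p : ℕ // p.Prime ∧ ¬ p ∣ q} =>
    hA p p.2.1.two_le _ (hg p p.2.1 p.2.2) s hs
  have hsum := (hZ.comp_injective Subtype.val_injective).of_nonneg_of_le (fun _ => norm_nonneg _)
    hbound
  refine ⟨hsum, ?_⟩
  have hprod := norm_tprod_one_add_le_exp hsum
  simp only [add_sub_cancel] at hprod
  exact hprod.trans <| Real.exp_le_exp.2 <|
    hsum.tsum_le_tsum_of_inj _ Subtype.val_injective (fun _ _ => by positivity) hbound hZ

/-- Lemma 6 of the paper: for `Re s ≥ -δ`, with `0 < δ < min(θ, 1/2)`, the product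
`Π_{p ∤ q} (1 + g(p)/p^s)(1 - 1/p^{s+1})^k` converges absolutely and is bounded
uniformly in `q` and `s`. -/
theorem stmt7 (k : ℤ) (θ δ Cg : ℝ) (hθ : 0 < θ) (hδ0 : 0 < δ)
    (hδ : δ < min θ (1 / 2)) (hCg : 0 < Cg) :
    ∃ B : ℝ, 0 < B ∧ ∀ q : ℕ, 0 < q → ∀ g : ℕ → ℝ, MultSF g →
      (∀ p : ℕ, p.Prime → ¬ p ∣ q → |g p - k / p| ≤ Cg / (p : ℝ) ^ (1 + θ)) →
      ∀ s : ℂ, -δ ≤ s.re →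
        Summable (fun p : {p : ℕ // p.Prime ∧ ¬ p ∣ q} =>
          ‖(1 + ((g p : ℝ) : ℂ) / ((p : ℕ) : ℂ) ^ s) *
              (1 - 1 / ((p : ℕ) : ℂ) ^ (s + 1)) ^ k - 1‖) ∧
        ‖∏' p : {p : ℕ // p.Prime ∧ ¬ p ∣ q},
            (1 + ((g p : ℝ) : ℂ) / ((p : ℕ) : ℂ) ^ s) *
              (1 - 1 / ((p : ℕ) : ℂ) ^ (s + 1)) ^ k‖ ≤ B :=
  stmt7_general k θ δ Cg hθ hδ hCg
end

section
/- Let k ≥ 1 be an integer and ν a multiplicative function on squarefree positive integers with 0 ≤ ν_p ≤ k for every prime p. Then for all R ≥ 2 and z ≥ 2, Σ_{d₁, d₂} ν_{[d₁,d₂]} ≤ C(k)·R²·(log z)^{3k}, where the sum runs over squarefree d₁, d₂ ≤ R all of whose prime factors are less than z, [d₁,d₂] denotes the least common multiple, and C(k) depends only on k. -/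
/-!
Since `ν` is multiplicative on squarefree numbers and `ν_p ≤ k`, we have
`ν_{[d₁,d₂]} ≤ k^{ω(d₁)} k^{ω(d₂)}`, so the double sum is at most `(∑_d k^{ω(d)})²`.
For squarefree `d ≤ R` one has `k^{ω(d)} = d ∏_{p ∣ d} k/p ≤ R ∏_{p ∣ d} k/p`, and summing over all
squarefree `d` whose prime factors are below `z` gives `∑_d k^{ω(d)} ≤ R ∏_{p < z} (1 + k/p)
≤ R exp (k ∑_{p < z} 1/p)`. Mertens' estimate `∑_{p ≤ N} 1/p ≤ log log N + O(1)`, obtained by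
partial summation from Chebyshev's `∑_{p ≤ N} log p / p ≤ log N + log 4` (Legendre's formula for
`N!` together with `θ(N) ≤ N log 4`), turns this into `O_k(R (log z)^k)`, so the double sum is even
`O_k(R² (log z)^{2k})`.
-/

open Finset Real
open scoped Classical Nat
open Nat (primesLE prime_of_mem_primesLE le_of_mem_primesLE)

lemma log_factorial_eq_sum_primesLE (N : ℕ) :
    log (N ! : ℝ) = ∑ p ∈ primesLE N, (N !).factorization p * log p := by
  rw [log_nat_eq_sum_factorization]
  refine Finsupp.sum_of_support_subset _ (fun p hp => ?_) _ (fun _ _ => by simp)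
  rw [Nat.support_factorization, Nat.mem_primeFactors] at hp
  exact Nat.mem_primesLE.2 ⟨(Nat.Prime.dvd_factorial hp.1).1 hp.2.1, hp.1⟩

lemma div_le_factorization_factorial {N p : ℕ} (hp : p.Prime) (hpN : p ≤ N) :
    N / p ≤ (N !).factorization p := by
  rw [Nat.factorization_factorial hp (Nat.lt_succ_of_le (Nat.log_le_self p N))]
  simpa using single_le_sum (f := fun i => N / p ^ i) (fun _ _ => Nat.zero_le _)
    (mem_Ico.2 ⟨le_rfl, by linarith [hp.one_lt]⟩ : 1 ∈ Ico 1 (N + 1))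

lemma sum_primesLE_log_div_le (N : ℕ) :
    ∑ p ∈ primesLE N, log p / p ≤ log N + log 4 := by
  rcases N.eq_zero_or_pos with rfl | hN
  · simpa using log_nonneg (by norm_num : (1 : ℝ) ≤ 4)
  have hN' : (0 : ℝ) < N := by exact_mod_cast hN
  have legendre : ∑ p ∈ primesLE N, ((N / p : ℕ) : ℝ) * log p ≤ N * log N := calc
    _ ≤ log (N ! : ℝ) := by
      rw [log_factorial_eq_sum_primesLE]
      gcongr with p hp
      exact div_le_factorization_factorial (prime_of_mem_primesLE hp) (le_of_mem_primesLE hp)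
    _ ≤ log ((N : ℝ) ^ N) := by
      gcongr
      exact_mod_cast N.factorial_le_pow
    _ = N * log N := log_pow N N
  have theta : ∑ p ∈ primesLE N, log p ≤ N * log 4 := by
    rw [← Chebyshev.theta_eq_sum_primesLE_log, mul_comm]
    exact Chebyshev.theta_le_log4_mul_x hN'.le
  have : N * ∑ p ∈ primesLE N, log p / p ≤ N * (log N + log 4) := calc
    _ = ∑ p ∈ primesLE N, ((N : ℝ) / p) * log p := by
      rw [mul_sum]; congr! 1 with p; ring
    _ ≤ ∑ p ∈ primesLE N, (((N / p : ℕ) : ℝ) + 1) * log p := by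
      gcongr with p hp
      rw [← Nat.floor_div_eq_div (K := ℝ)]; linarith [Nat.sub_one_lt_floor ((N : ℝ) / p)]
    _ ≤ N * (log N + log 4) := by
      simp only [add_mul, one_mul, sum_add_distrib]; linarith
  exact le_of_mul_le_mul_left this hN'

lemma sum_primesLE_succ {M : Type*} [AddCommMonoid M] (f : ℕ → M) (n : ℕ) :
    ∑ p ∈ primesLE (n + 1), f p =
      ∑ p ∈ primesLE n, f p + if (n + 1).Prime then f (n + 1) else 0 := by
  rw [Nat.primesLE_succ]
  split_ifs with h
  · rw [sum_insert (fun hn => by simpa using le_of_mem_primesLE hn), add_comm]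
  · rw [add_zero]

lemma log_four_le_two : log 4 ≤ 2 := by
  rw [show (4 : ℝ) = 2 ^ 2 by norm_num, log_pow]
  push_cast
  linarith [log_two_lt_d9]

lemma div_sub_div_le_log_sub_log {a b c : ℝ} (ha : 0 < a) (hab : a ≤ b) (hc : c ≤ a) :
    c / a - c / b ≤ log b - log a := by
  have hb : 0 < b := ha.trans_le hab
  calc c / a - c / b = c * (1 / a - 1 / b) := by ring
    _ ≤ a * (1 / a - 1 / b) := by
      gcongr
      rw [sub_nonneg]; gcongr
    _ = 1 - (b / a)⁻¹ := by field_simp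
    _ ≤ log (b / a) := one_sub_inv_le_log_of_pos (by positivity)
    _ = log b - log a := log_div hb.ne' ha.ne'

/-- Discrete partial summation of `1/p = (log p / p) · (1 / log p)`: the Chebyshev bound
`∑_{p ≤ M} log p / p ≤ log M + 2` makes this nonincreasing for `M ≥ 2`. -/
noncomputable def mertensPotential (M : ℕ) : ℝ :=
  ∑ p ∈ primesLE M, (p : ℝ)⁻¹ - (∑ p ∈ primesLE M, log p / p - 2) / log M - log (log M)

lemma mertensPotential_succ {M : ℕ} (hM : 1 ≤ M) :
    mertensPotential (M + 1) = ∑ p ∈ primesLE M, (p : ℝ)⁻¹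
      - (∑ p ∈ primesLE M, log p / p - 2) / log (M + 1 : ℕ) - log (log (M + 1 : ℕ)) := by
  unfold mertensPotential
  rw [sum_primesLE_succ, sum_primesLE_succ]
  split_ifs
  · have : log (M + 1 : ℕ) ≠ 0 := (log_pos (by norm_cast; omega)).ne'
    field_simp
    ring
  · simp only [add_zero]

lemma mertensPotential_succ_le {M : ℕ} (hM : 2 ≤ M) :
    mertensPotential (M + 1) ≤ mertensPotential M := by
  rw [mertensPotential_succ (by omega), mertensPotential]
  have hlogM : 0 < log M := log_pos (by norm_cast)
  have key := div_sub_div_le_log_sub_log hlogM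
    (log_le_log (by positivity) (by norm_cast; omega : (M : ℝ) ≤ (M + 1 : ℕ)))
    (by linarith [sum_primesLE_log_div_le M, log_four_le_two] :
      ∑ p ∈ primesLE M, log p / p - 2 ≤ log M)
  linarith

lemma sum_primesLE_inv_le {N : ℕ} (hN : 2 ≤ N) :
    ∑ p ∈ primesLE N, (p : ℝ)⁻¹ ≤ log (log N) + (1 + mertensPotential 2) := by
  have hF : mertensPotential N ≤ mertensPotential 2 := by
    induction N, hN using Nat.le_induction with
    | base => exact le_rfl
    | succ M hM ih => exact (mertensPotential_succ_le hM).trans ih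
  have hlogN : 0 < log N := log_pos (by norm_cast)
  have hL : (∑ p ∈ primesLE N, log p / p - 2) / log N ≤ 1 := by
    rw [div_le_one hlogN]
    linarith [sum_primesLE_log_div_le N, log_four_le_two]
  rw [mertensPotential] at hF
  linarith

lemma prod_primesLE_one_add_le (k : ℕ) {N : ℕ} (hN : 2 ≤ N) :
    ∏ p ∈ primesLE N, (1 + (k : ℝ) / p) ≤
      exp (k * (1 + mertensPotential 2)) * log N ^ k := by
  have hlogN : 0 < log N := log_pos (by norm_cast)
  calc ∏ p ∈ primesLE N, (1 + (k : ℝ) / p)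
      ≤ ∏ p ∈ primesLE N, exp ((k : ℝ) / p) := by
        gcongr with p
        linarith [add_one_le_exp ((k : ℝ) / p)]
    _ = exp (k * ∑ p ∈ primesLE N, (p : ℝ)⁻¹) := by
        rw [← exp_sum, mul_sum]; simp only [div_eq_mul_inv]
    _ ≤ exp (k * (log (log N) + (1 + mertensPotential 2))) := by
        gcongr; exact sum_primesLE_inv_le hN
    _ = exp (k * (1 + mertensPotential 2)) * log N ^ k := by
        rw [mul_add, exp_add, exp_nat_mul, exp_log hlogN, mul_comm]

lemma sum_prod_primeFactors_le_prod_one_add {A P : Finset ℕ} (g : ℕ → ℝ)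
    (hg : ∀ p ∈ P, 0 ≤ g p) (hA : ∀ d ∈ A, Squarefree d ∧ d.primeFactors ⊆ P) :
    ∑ d ∈ A, ∏ p ∈ d.primeFactors, g p ≤ ∏ p ∈ P, (1 + g p) := by
  have hinj : Set.InjOn Nat.primeFactors A := fun d₁ h₁ d₂ h₂ h => by
    rw [← Nat.prod_primeFactors_of_squarefree (hA d₁ h₁).1,
      ← Nat.prod_primeFactors_of_squarefree (hA d₂ h₂).1, h]
  rw [prod_one_add, ← sum_image (f := fun s => ∏ p ∈ s, g p) hinj]
  refine sum_le_sum_of_subset_of_nonneg (fun s hs => ?_) (fun s hs _ => ?_)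
  · obtain ⟨d, hd, rfl⟩ := mem_image.1 hs
    exact mem_powerset.2 (hA d hd).2
  · exact prod_nonneg fun p hp => hg p (mem_powerset.1 hs hp)

lemma sum_pow_card_primeFactors_le {A P : Finset ℕ} {k R : ℝ} (hk : 0 ≤ k) (hR : 0 ≤ R)
    (hA : ∀ d ∈ A, Squarefree d ∧ d.primeFactors ⊆ P ∧ (d : ℝ) ≤ R) :
    ∑ d ∈ A, k ^ #d.primeFactors ≤ R * ∏ p ∈ P, (1 + k / p) := by
  calc ∑ d ∈ A, k ^ #d.primeFactors = ∑ d ∈ A, d * ∏ p ∈ d.primeFactors, k / p := by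
        refine sum_congr rfl fun d hd => ?_
        have hd0 : (d : ℝ) ≠ 0 := by exact_mod_cast (hA d hd).1.ne_zero
        rw [prod_div_distrib, prod_const, ← Nat.cast_prod,
          Nat.prod_primeFactors_of_squarefree (hA d hd).1]
        field_simp
    _ ≤ ∑ d ∈ A, R * ∏ p ∈ d.primeFactors, k / p := by
        gcongr with d hd
        exact (hA d hd).2.2
    _ ≤ R * ∏ p ∈ P, (1 + k / p) := by
        rw [← mul_sum]
        gcongr
        exact sum_prod_primeFactors_le_prod_one_add _ (fun p _ => by positivity)
          fun d hd => ⟨(hA d hd).1, (hA d hd).2.1⟩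

lemma Nat.squarefree_lcm {m n : ℕ} (hm : Squarefree m) (hn : Squarefree n) :
    Squarefree (m.lcm n) := by
  refine Nat.squarefree_of_factorization_le_one (Nat.lcm_ne_zero hm.ne_zero hn.ne_zero)
    fun p => ?_
  rw [Nat.factorization_lcm hm.ne_zero hn.ne_zero, Finsupp.sup_apply]
  exact sup_le (hm.natFactorization_le_one p) (hn.natFactorization_le_one p)

lemma apply_eq_prod_primeFactors_of_squarefree {M : Type*} [CommMonoid M] {ν : ℕ → M}
    (h1 : ν 1 = 1)
    (hmul : ∀ m n : ℕ, Nat.Coprime m n → Squarefree m → Squarefree n → ν (m * n) = ν m * ν n)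
    {d : ℕ} (hd : Squarefree d) : ν d = ∏ p ∈ d.primeFactors, ν p := by
  suffices ∀ s ⊆ d.primeFactors, ν (∏ p ∈ s, p) = ∏ p ∈ s, ν p by
    simpa [Nat.prod_primeFactors_of_squarefree hd] using this _ subset_rfl
  intro s
  induction s using Finset.induction_on with
  | empty => simpa using h1
  | insert p s hps ih =>
    intro hs
    have hp := Nat.prime_of_mem_primeFactors (hs (mem_insert_self p s))
    have hsd : s ⊆ d.primeFactors := (subset_insert p s).trans hs
    rw [prod_insert hps, prod_insert hps, hmul, ih hsd]
    · exact Nat.Coprime.prod_right fun q hq => (Nat.coprime_primes hp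
        (Nat.prime_of_mem_primeFactors (hsd hq))).2 (ne_of_mem_of_not_mem hq hps).symm
    · exact hp.squarefree
    · refine hd.squarefree_of_dvd ((prod_dvd_prod_of_subset _ _ id hsd).trans ?_)
      exact (Nat.prod_primeFactors_of_squarefree hd).dvd

lemma apply_lcm_le_pow_mul_pow {ν : ℕ → ℝ} {k : ℝ} (hk : 1 ≤ k) (h1 : ν 1 = 1)
    (hmul : ∀ m n : ℕ, Nat.Coprime m n → Squarefree m → Squarefree n → ν (m * n) = ν m * ν n)
    (hν : ∀ p : ℕ, p.Prime → 0 ≤ ν p ∧ ν p ≤ k) {m n : ℕ} (hm : Squarefree m)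
    (hn : Squarefree n) :
    ν (m.lcm n) ≤ k ^ #m.primeFactors * k ^ #n.primeFactors := by
  have hsub : (m.lcm n).primeFactors ⊆ m.primeFactors ∪ n.primeFactors := by
    rw [← Nat.primeFactors_mul hm.ne_zero hn.ne_zero]
    exact Nat.primeFactors_mono (Nat.lcm_dvd_mul m n) (mul_ne_zero hm.ne_zero hn.ne_zero)
  calc ν (m.lcm n) = ∏ p ∈ (m.lcm n).primeFactors, ν p :=
        apply_eq_prod_primeFactors_of_squarefree h1 hmul (Nat.squarefree_lcm hm hn)
    _ ≤ ∏ p ∈ (m.lcm n).primeFactors, k :=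
        prod_le_prod (fun p hp => (hν p (Nat.prime_of_mem_primeFactors hp)).1)
          (fun p hp => (hν p (Nat.prime_of_mem_primeFactors hp)).2)
    _ ≤ k ^ (#m.primeFactors + #n.primeFactors) := by
        rw [prod_const]
        exact pow_le_pow_right₀ hk ((card_le_card hsub).trans (card_union_le _ _))
    _ = k ^ #m.primeFactors * k ^ #n.primeFactors := pow_add _ _ _

lemma sum_pow_card_primeFactors_le_mul_log_pow (k : ℕ) {A : Finset ℕ} {R z : ℝ} (hR : 0 ≤ R)
    (hz : 2 ≤ z)
    (hA : ∀ d ∈ A, Squarefree d ∧ (d : ℝ) ≤ R ∧ ∀ p : ℕ, p.Prime → p ∣ d → (p : ℝ) < z) :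
    ∑ d ∈ A, (k : ℝ) ^ #d.primeFactors ≤
      R * (exp (k * (1 + mertensPotential 2)) * log z ^ k) := by
  have hA' : ∀ d ∈ A, Squarefree d ∧ d.primeFactors ⊆ primesLE ⌊z⌋₊ ∧ (d : ℝ) ≤ R := by
    intro d hd
    obtain ⟨hsq, hdR, hdz⟩ := hA d hd
    refine ⟨hsq, fun p hp => ?_, hdR⟩
    have hpp := Nat.prime_of_mem_primeFactors hp
    exact Nat.mem_primesLE.2
      ⟨Nat.le_floor (hdz p hpp (Nat.dvd_of_mem_primeFactors hp)).le, hpp⟩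
  have hN : 2 ≤ ⌊z⌋₊ := Nat.le_floor (by exact_mod_cast hz)
  have hN' : (1 : ℝ) ≤ ⌊z⌋₊ := by exact_mod_cast (by omega : 1 ≤ ⌊z⌋₊)
  calc ∑ d ∈ A, (k : ℝ) ^ #d.primeFactors
      ≤ R * ∏ p ∈ primesLE ⌊z⌋₊, (1 + (k : ℝ) / p) :=
        sum_pow_card_primeFactors_le (by positivity) hR hA'
    _ ≤ R * (exp (k * (1 + mertensPotential 2)) * log ⌊z⌋₊ ^ k) := by
        gcongr
        exact prod_primesLE_one_add_le k hN
    _ ≤ R * (exp (k * (1 + mertensPotential 2)) * log z ^ k) := by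
        gcongr
        exact Nat.floor_le (by linarith)

/-- The bound `Σ_{d₁,d₂ ≤ R squarefree, z-smooth} ν_{[d₁,d₂]} ≤ C(k) R² (log z)^{3k}`
from the estimation of the error term `E₀` in the proof of Theorem 3. -/
theorem stmt10 (k : ℕ) (hk : 1 ≤ k) :
    ∃ C : ℝ, 0 < C ∧ ∀ ν : ℕ → ℝ, ν 1 = 1 →
      (∀ m n : ℕ, Nat.Coprime m n → Squarefree m → Squarefree n →
        ν (m * n) = ν m * ν n) →
      (∀ p : ℕ, p.Prime → 0 ≤ ν p ∧ ν p ≤ k) →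
      ∀ R z : ℝ, 2 ≤ R → 2 ≤ z →
        ∑ d₁ ∈ (Finset.Icc 1 ⌊R⌋₊).filter
            (fun d => Squarefree d ∧ ∀ p : ℕ, p.Prime → p ∣ d → (p : ℝ) < z),
          ∑ d₂ ∈ (Finset.Icc 1 ⌊R⌋₊).filter
              (fun d => Squarefree d ∧ ∀ p : ℕ, p.Prime → p ∣ d → (p : ℝ) < z),
            ν (Nat.lcm d₁ d₂)
          ≤ C * R ^ 2 * Real.log z ^ (3 * k) := by
  set E := exp (k * (1 + mertensPotential 2))
  refine ⟨E ^ 2 / log 2 ^ k, by positivity, fun ν h1 hmul hν R z hR hz => ?_⟩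
  set A := (Finset.Icc 1 ⌊R⌋₊).filter
    (fun d => Squarefree d ∧ ∀ p : ℕ, p.Prime → p ∣ d → (p : ℝ) < z)
  have hA : ∀ d ∈ A, Squarefree d ∧ (d : ℝ) ≤ R ∧
      ∀ p : ℕ, p.Prime → p ∣ d → (p : ℝ) < z := fun d hd => by
    obtain ⟨hdR, hsq, hdz⟩ := by simpa [A] using hd
    exact ⟨hsq, (Nat.cast_le.2 hdR.2).trans (Nat.floor_le (by linarith)), hdz⟩
  have hsum := sum_pow_card_primeFactors_le_mul_log_pow k (by linarith) hz hA
  have hlogz : 0 < log z := log_pos (by linarith)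
  have hlog : log 2 ^ k ≤ log z ^ k := by gcongr
  calc ∑ d₁ ∈ A, ∑ d₂ ∈ A, ν (d₁.lcm d₂)
      ≤ ∑ d₁ ∈ A, ∑ d₂ ∈ A, (k : ℝ) ^ #d₁.primeFactors * (k : ℝ) ^ #d₂.primeFactors := by
        gcongr with d₁ hd₁ d₂ hd₂
        exact apply_lcm_le_pow_mul_pow (by exact_mod_cast hk) h1 hmul hν (hA d₁ hd₁).1
          (hA d₂ hd₂).1
    _ = (∑ d ∈ A, (k : ℝ) ^ #d.primeFactors) ^ 2 := by rw [sq, sum_mul_sum]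
    _ ≤ (R * (E * log z ^ k)) ^ 2 := by gcongr
    _ = E ^ 2 * R ^ 2 * log z ^ (2 * k) * 1 := by ring
    _ ≤ E ^ 2 * R ^ 2 * log z ^ (2 * k) * (log z ^ k / log 2 ^ k) := by
        gcongr
        rwa [one_le_div (by positivity)]
    _ = E ^ 2 / log 2 ^ k * R ^ 2 * log z ^ (3 * k) := by ring
end
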